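/- arXiv:2601.17395 — 2 statements merged into one kernel-verified Lean document; each statement's English description precedes it below -/
import Mathlib

section
/- Let (K,v) be a henselian valued field with uniformizer π. Then for every x ∈ K: x lies in the valuation ring O_v if and only if there exists z ∈ K with z² + z = πx². -/
open FirstOrder FirstOrder.Language

universe u v w x

namespace Paper



/-! ### Syntactic fragments -/

/-- `IsExistsN n φ`: `φ` is an `∃_n`-formula, i.e. of the form `∃ x₁ … x_m ψ`
with `m ≤ n` and `ψ` quantifier-free. -/
inductive IsExistsN {L : Language} {α : Type*} : ℕ → ∀ {k : ℕ}, L.BoundedFormula α k → Prop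
  | qf {n k : ℕ} {φ : L.BoundedFormula α k} : φ.IsQF → IsExistsN n φ
  | ex {n k : ℕ} {φ : L.BoundedFormula α (k + 1)} : IsExistsN n φ → IsExistsN (n + 1) φ.ex

/-- `φ` is an existential formula. -/
def IsExists {L : Language} {α : Type*} {k : ℕ} (φ : L.BoundedFormula α k) : Prop :=
  ∃ n : ℕ, IsExistsN n φ

/-- Positive boolean combinations of formulas satisfying `P`. -/
inductive IsPosBC {L : Language} {α : Type*} (P : ∀ {k : ℕ}, L.BoundedFormula α k → Prop) :
    ∀ {k : ℕ}, L.BoundedFormula α k → Prop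
  | base {k : ℕ} {φ : L.BoundedFormula α k} : P φ → IsPosBC P φ
  | inf {k : ℕ} {φ ψ : L.BoundedFormula α k} :
      IsPosBC P φ → IsPosBC P ψ → IsPosBC P (φ ⊓ ψ)
  | sup {k : ℕ} {φ ψ : L.BoundedFormula α k} :
      IsPosBC P φ → IsPosBC P ψ → IsPosBC P (φ ⊔ ψ)

/-- The `∃₁`-fragment: positive boolean combinations of formulas of the form `η` or `∃ y η`
with `η` quantifier-free. -/
def IsE1 {L : Language} {α : Type*} {k : ℕ} (φ : L.BoundedFormula α k) : Prop :=
  IsPosBC (fun {k} φ => φ.IsQF ∨ ∃ ψ : L.BoundedFormula α (k + 1), ψ.IsQF ∧ φ = ψ.ex) φ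

/-- `∃_n∃₁`-formulas: `∃ x₁ … x_m ψ` with `m ≤ n` and `ψ` in the `∃₁`-fragment. -/
inductive IsExistsNE1 {L : Language} {α : Type*} : ℕ → ∀ {k : ℕ}, L.BoundedFormula α k → Prop
  | e1 {n k : ℕ} {φ : L.BoundedFormula α k} : IsE1 φ → IsExistsNE1 n φ
  | ex {n k : ℕ} {φ : L.BoundedFormula α (k + 1)} : IsExistsNE1 n φ → IsExistsNE1 (n + 1) φ.ex

/-- The `∃^n`-fragments, defined inductively: `∃^0`-formulas are the quantifier-free ones,
and an `∃^{n+1}`-formula is of the form `ψ` or `∃ x ψ` with `ψ` a positive boolean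
combination of `∃^n`-formulas. -/
def IsExpN {L : Language} {α : Type*} : ℕ → ∀ {k : ℕ}, L.BoundedFormula α k → Prop
  | 0, _, φ => φ.IsQF
  | n + 1, k, φ => IsPosBC (IsExpN n) φ ∨
      ∃ ψ : L.BoundedFormula α (k + 1), IsPosBC (IsExpN n) ψ ∧ φ = ψ.ex



/-! ### The language of rings with constants, and realization -/

/-- The `Language.ring`-structure on a ring. -/
noncomputable def ringStructure (M : Type*) [CommRing M] : Language.ring.Structure M :=
  (FirstOrder.Ring.compatibleRingOfRing M).toStructure

/-- The `L_ring(α)`-structure on a ring `M` with constants interpreted via `f : α → M`. -/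
noncomputable def ringConStructure {α M : Type*} [CommRing M] (f : α → M) :
    (Language.ring[[α]]).Structure M :=
  letI := ringStructure M
  letI := constantsOn.structure f
  inferInstance

/-- `M ⊨ φ` for an `L_ring(α)`-sentence, with constants interpreted via `f`. -/
def RealizeRing (M : Type*) [CommRing M] {α : Type*} (f : α → M)
    (φ : (Language.ring[[α]]).Sentence) : Prop :=
  @Sentence.Realize _ M (ringConStructure f) φ

/-- The unary relation symbol `O` for the valuation ring. -/
inductive ValRel : ℕ → Type
  | isO : ValRel 1

/-- The language with a single unary predicate `O`. -/
def oLang : Language := ⟨fun _ => Empty, ValRel⟩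

/-- The language of valued fields `L_val = L_ring ∪ {O}`. -/
abbrev Lval : Language := Language.ring.sum oLang

/-- The `oLang`-structure on `M` in which `O` is interpreted as the set `O`. -/
def oStructure {M : Type*} (O : Set M) : oLang.Structure M where
  funMap := fun f _ => f.elim
  RelMap := fun {_} r => match r with
    | .isO => fun xs => xs 0 ∈ O

/-- The `L_val(α)`-structure on a ring `M`, with `O` interpreted as the set `O` and
constants interpreted via `f : α → M`. -/
noncomputable def valConStructure {α M : Type*} [CommRing M] (O : Set M) (f : α → M) :
    (Lval[[α]]).Structure M :=
  letI := ringStructure M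
  letI := oStructure O
  letI : Lval.Structure M := inferInstance
  letI := constantsOn.structure f
  inferInstance

/-- `M ⊨ φ` for an `L_val(α)`-sentence. -/
def RealizeVal (M : Type*) [CommRing M] (O : Set M) {α : Type*} (f : α → M)
    (φ : (Lval[[α]]).Sentence) : Prop :=
  @Sentence.Realize _ M (valConStructure O f) φ



abbrev Zm0 : Type := WithZero (Multiplicative ℤ)

variable {K : Type*} [Field K] {Γ : Type*} [LinearOrderedCommGroupWithZero Γ]

/-- `π` is a uniformizer of `(K, v)`: `v π` is minimal positive
(multiplicatively: `0 < v π < 1` and `v π` is the largest value `< 1`). -/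
def IsUniformizer (v : Valuation K Γ) (π : K) : Prop :=
  0 < v π ∧ v π < 1 ∧ ∀ x : K, v x < 1 → v x ≤ v π

/-- The valuation ring of `v`, as a set. -/
def Oset (v : Valuation K Γ) : Set K := {x | v x ≤ 1}

/-- The residue field `Kv` of the valued field `(K, v)`. -/
abbrev ResF (v : Valuation K Γ) : Type _ :=
  IsLocalRing.ResidueField v.valuationSubring

/-- The residue map `O_v → Kv`. -/
abbrev resMap (v : Valuation K Γ) : v.valuationSubring →+* ResF v :=
  IsLocalRing.residue _

/-- `(K, v)` is a henselian valued field. -/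
abbrev IsHenselian (v : Valuation K Γ) : Prop :=
  HenselianLocalRing v.valuationSubring

/-- compatibility of a ring homomorphism between residue fields with the residue maps,
for an extension `(K, v)` of `(C, u)`. -/
def ResCompat {C : Type*} [Field C] {Γ₀ : Type*} [LinearOrderedCommGroupWithZero Γ₀]
    (u : Valuation C Γ₀) [Algebra C K] (v : Valuation K Γ)
    (g : ResF u →+* ResF v) : Prop :=
  ∀ (x : u.valuationSubring) (hx : algebraMap C K ↑x ∈ v.valuationSubring),
    g (resMap u x) = resMap v ⟨algebraMap C K ↑x, hx⟩

/-- `(K, v)` is complete (with respect to the valuation uniformity). -/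
def IsCompleteValued (v : Valuation K Γ) : Prop :=
  letI : Valued K Γ := Valued.mk' v
  CompleteSpace K



/-- `E/F` admits a separating transcendence basis. -/
def HasSepTransBasis (F E : Type*) [Field F] [Field E] [Algebra F E] : Prop :=
  ∃ s : Set E, AlgebraicIndependent F ((↑) : s → E) ∧
    Algebra.IsSeparable (IntermediateField.adjoin F s) E

/-- The field extension `E/F` is separable: every finitely generated subextension
admits a separating transcendence basis. -/
def IsSepExt (F E : Type*) [Field F] [Field E] [Algebra F E] : Prop :=
  ∀ s : Finset E, HasSepTransBasis F (IntermediateField.adjoin F (s : Set E))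

/-- The extension given by a ring homomorphism `f : F →+* E` of fields is separable. -/
def IsSepExtHom {F E : Type*} [Field F] [Field E] (f : F →+* E) : Prop :=
  letI := f.toAlgebra
  IsSepExt F E

/-- `trdeg(E/F) ≤ d`: there is a finite transcendence basis with at most `d` elements. -/
def TrdegLE (F E : Type*) [CommRing F] [CommRing E] [Algebra F E] (d : ℕ) : Prop :=
  ∃ s : Finset E, s.card ≤ d ∧ IsTranscendenceBasis F (Subtype.val : ((s : Set E)) → E)

/-- `F` is a large field: `F` is existentially closed in `F((t))`. -/
def LargeField (F : Type u) [Field F] : Prop :=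
  ∀ φ : (Language.ring[[F]]).Sentence, IsExists φ →
    RealizeRing (LaurentSeries F) (algebraMap F (LaurentSeries F)) φ →
    RealizeRing F (id : F → F) φ

/-- `(R4_n)`: whenever a valuation `w` on a field `E` is trivial on a large subfield `F` of `E`
with residue field `Eu = F` (via the residue map), every `∃_n`-`L_ring(F)`-sentence true in `E`
is true in `F`. -/
def R4N (n : ℕ) : Prop :=
  ∀ (E : Type u) [Field E] (Γ : Type u) [LinearOrderedCommGroupWithZero Γ]
    (w : Valuation E Γ) (F : Subfield E),
    LargeField.{u} F →
    (∀ y : F, (y : E) ≠ 0 → w y = 1) →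
    (∀ y : E, w y ≤ 1 → ∃ x : F, w (y - x) < 1) →
    ∀ φ : (Language.ring[[F]]).Sentence, IsExistsN n φ →
      RealizeRing E ((↑) : F → E) φ → RealizeRing F (id : F → F) φ

/-- Excellence of the valuation ring of an (equicharacteristic, `ℤ`-valued) valued field
`(C, u)`, via the characterization: the fraction field of the completion (i.e. the completion
of `C`) is a separable extension of `C`. -/
def ExcellentCompletion (C : Type u) [Field C] (u : Valuation C Zm0) : Prop :=
  letI : Valued C Zm0 := Valued.mk' u
  letI : Field (UniformSpace.Completion C) := UniformSpace.Completion.instField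
  IsSepExtHom (UniformSpace.Completion.coeRingHom : C →+* UniformSpace.Completion C)


/-- `Th_P(K, fK) ⊆ Th_P(L, fL)`: every positive boolean combination of `L_ring(α)`-sentences
of the fragment `P` that is true in `K` is true in `L`. -/
def ThRingSub {α : Type*} (P : ∀ {k : ℕ}, (Language.ring[[α]]).BoundedFormula Empty k → Prop)
    (K : Type*) [CommRing K] (fK : α → K) (L : Type*) [CommRing L] (fL : α → L) : Prop :=
  ∀ φ : (Language.ring[[α]]).Sentence, IsPosBC P φ →
    RealizeRing K fK φ → RealizeRing L fL φ

/-- `Th_P(K, OK, fK) ⊆ Th_P(L, OL, fL)` for `L_val(α)`-sentences. -/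
def ThValSub {α : Type*} (P : ∀ {k : ℕ}, (Lval[[α]]).BoundedFormula Empty k → Prop)
    (K : Type*) [CommRing K] (OK : Set K) (fK : α → K)
    (L : Type*) [CommRing L] (OL : Set L) (fL : α → L) : Prop :=
  ∀ φ : (Lval[[α]]).Sentence, IsPosBC P φ →
    RealizeVal K OK fK φ → RealizeVal L OL fL φ

end Paper

namespace Paper

/-- Lemma `lem:def` of the paper, semantic version.
Let `(K, v)` be a henselian valued field with uniformizer `π`.  Then for every `x ∈ K`:
`x` lies in the valuation ring `O_v` if and only if there is `z ∈ K` with `z² + z = π·x²`. -/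
theorem statement8
    (K : Type u) [Field K]
    (Γ : Type u) [LinearOrderedCommGroupWithZero Γ] (v : Valuation K Γ)
    (hhens : IsHenselian v)
    (π : K) (hπ : IsUniformizer v π)
    (x : K) :
    v x ≤ 1 ↔ ∃ z : K, z ^ 2 + z = π * x ^ 2 := by
  obtain ⟨hπ0, hπ1, hπmin⟩ := hπ
  have hπne : v π ≠ 0 := ne_of_gt hπ0
  constructor
  · intro hx
    have hc : v (π * x ^ 2) < 1 := by
      have h1 : v (π * x ^ 2) = v π * v x ^ 2 := by
        rw [Valuation.map_mul, Valuation.map_pow]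
      have h2 : v x ^ 2 ≤ 1 := pow_le_one₀ zero_le' hx
      calc v (π * x ^ 2) = v π * v x ^ 2 := h1
        _ ≤ v π * 1 := mul_le_mul_right h2 _
        _ = v π := mul_one _
        _ < 1 := hπ1
    set c : v.valuationSubring := ⟨π * x ^ 2, le_of_lt hc⟩ with hcdef
    have hmon : (Polynomial.X ^ 2 + (Polynomial.X - Polynomial.C c)).Monic := by
      apply Polynomial.monic_X_pow_add
      exact lt_of_le_of_lt (Polynomial.degree_X_sub_C_le c) (by decide)
    have heval : (Polynomial.X ^ 2 + (Polynomial.X - Polynomial.C c)).eval 0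
        ∈ IsLocalRing.maximalIdeal v.valuationSubring := by
      simp only [Polynomial.eval_add, Polynomial.eval_pow, Polynomial.eval_X,
        Polynomial.eval_sub, Polynomial.eval_C]
      rw [IsLocalRing.mem_maximalIdeal, mem_nonunits_iff]
      intro hu
      obtain ⟨u, hu'⟩ := hu
      have : v ((((0:v.valuationSubring) ^ 2 + (0 - c)) : v.valuationSubring) : K) < 1 := by
        push_cast
        simpa using (show v (c : K) < 1 from hc)
      have hone : v ((((0:v.valuationSubring) ^ 2 + (0 - c)) : v.valuationSubring) : K)
          * v (((u⁻¹ : v.valuationSubringˣ) : v.valuationSubring) : K) = 1 := by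
        rw [← Valuation.map_mul]
        have : ((((0:v.valuationSubring) ^ 2 + (0 - c)) : v.valuationSubring) : K)
            * (((u⁻¹ : v.valuationSubringˣ) : v.valuationSubring) : K) = 1 := by
          rw [← hu']
          norm_cast
          simp
        rw [this, Valuation.map_one]
      have hle : v (((u⁻¹ : v.valuationSubringˣ) : v.valuationSubring) : K) ≤ 1 :=
        ((u⁻¹ : v.valuationSubringˣ) : v.valuationSubring).2
      have : v ((((0:v.valuationSubring) ^ 2 + (0 - c)) : v.valuationSubring) : K)
          * v (((u⁻¹ : v.valuationSubringˣ) : v.valuationSubring) : K) < 1 := by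
        calc _ ≤ v ((((0:v.valuationSubring) ^ 2 + (0 - c)) : v.valuationSubring) : K) * 1 :=
              mul_le_mul_right hle _
          _ = _ := mul_one _
          _ < 1 := this
      rw [hone] at this
      exact lt_irrefl _ this
    have hderiv : IsUnit ((Polynomial.X ^ 2 + (Polynomial.X - Polynomial.C c)).derivative.eval 0) := by
      simp only [Polynomial.derivative_add, Polynomial.derivative_X_pow, Polynomial.derivative_sub,
        Polynomial.derivative_X, Polynomial.derivative_C, Polynomial.eval_add, Polynomial.eval_sub,
        Polynomial.eval_mul, Polynomial.eval_X, Polynomial.eval_pow]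
      norm_num
    obtain ⟨a, ha, -⟩ := hhens.is_henselian _ hmon 0 heval hderiv
    refine ⟨(a : K), ?_⟩
    have ha' : a ^ 2 + a = c := by
      have := ha
      simp only [Polynomial.IsRoot, Polynomial.eval_add, Polynomial.eval_pow, Polynomial.eval_X,
        Polynomial.eval_sub, Polynomial.eval_C] at this
      linear_combination this
    have := congrArg (Subtype.val) ha'
    push_cast at this
    simpa using this
  · rintro ⟨z, hz⟩
    by_contra h
    push_neg at h
    have hxne : v x ≠ 0 := ne_of_gt (lt_trans zero_lt_one h)
    -- v x ≥ (v π)⁻¹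
    have hxinv : (v x)⁻¹ ≤ v π := by
      have : v x⁻¹ < 1 := by
        rw [map_inv₀]
        exact inv_lt_one_of_one_lt₀ h
      have := hπmin x⁻¹ this
      rwa [map_inv₀] at this
    have hrhs : v (π * x ^ 2) = v π * v x ^ 2 := by
      rw [Valuation.map_mul, Valuation.map_pow]
    have hbig : 1 < v π * v x ^ 2 := by
      have h1 : (v π)⁻¹ ≤ v x :=
        (inv_le_comm₀ (zero_lt_iff.mpr hxne) hπ0).mp hxinv
      have h2 : (v π)⁻¹ * (v π)⁻¹ ≤ v x * v x := mul_le_mul' h1 h1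
      have hπinv : 1 < (v π)⁻¹ := one_lt_inv₀ hπ0 |>.mpr hπ1
      calc (1:Γ) < (v π)⁻¹ := hπinv
        _ = v π * ((v π)⁻¹ * (v π)⁻¹) := by
            rw [← mul_assoc, mul_inv_cancel₀ hπne, one_mul]
        _ ≤ v π * (v x * v x) := mul_le_mul_right h2 _
        _ = v π * v x ^ 2 := by rw [sq]
    -- hence v z > 1
    have hz1 : 1 < v z := by
      by_contra hz1
      push_neg at hz1
      have : v (z ^ 2 + z) ≤ 1 := by
        apply le_trans (Valuation.map_add _ _ _)
        apply max_le
        · rw [Valuation.map_pow]; exact pow_le_one₀ zero_le' hz1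
        · exact hz1
      rw [hz, hrhs] at this
      exact absurd this (not_le_of_gt hbig)
    have hzne : v z ≠ 0 := ne_of_gt (lt_trans zero_lt_one hz1)
    have hvz2 : v (z ^ 2) = v z ^ 2 := Valuation.map_pow _ _ _
    have hne : v (z ^ 2) ≠ v z := by
      rw [hvz2, sq]
      intro hh
      have : v z = 1 := by
        have := mul_right_cancel₀ hzne (hh.trans (one_mul (v z)).symm)
        exact this
      rw [this] at hz1; exact lt_irrefl _ hz1
    have hmax : v (z ^ 2 + z) = v z ^ 2 := by
      rw [Valuation.map_add_of_distinct_val _ hne, hvz2]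
      rw [max_eq_left]
      calc v z = 1 * v z := (one_mul _).symm
        _ ≤ v z * v z := mul_le_mul_left (le_of_lt hz1) _
        _ = v z ^ 2 := (sq _).symm
    have key : v z ^ 2 = v π * v x ^ 2 := by rw [← hmax, hz, hrhs]
    -- v z < v x
    have hzltx : v z < v x := by
      have hlt : v z ^ 2 < v x ^ 2 := by
        calc v z ^ 2 = v π * v x ^ 2 := key
          _ = v x ^ 2 * v π := mul_comm _ _
          _ < v x ^ 2 * 1 := mul_lt_mul_of_pos_left hπ1 (zero_lt_iff.mpr (pow_ne_zero 2 hxne))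
          _ = v x ^ 2 := mul_one _
      exact lt_of_pow_lt_pow_left₀ 2 zero_le' hlt
    -- w = v(z/x) < 1, w² = v π
    have hw : v (z * x⁻¹) < 1 := by
      rw [Valuation.map_mul, map_inv₀]
      rw [mul_inv_lt_iff₀ (zero_lt_iff.mpr hxne), one_mul]
      exact hzltx
    have hwsq : v (z * x⁻¹) ^ 2 = v π := by
      rw [Valuation.map_mul, map_inv₀, mul_pow, key, inv_pow]
      rw [mul_assoc, mul_inv_cancel₀ (pow_ne_zero 2 hxne), mul_one]
    have hwle : v (z * x⁻¹) ≤ v π := hπmin _ hw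
    have : v π < v π := by
      calc v π = v (z * x⁻¹) ^ 2 := hwsq.symm
        _ ≤ v π ^ 2 := pow_le_pow_left' hwle 2
        _ = v π * v π := sq (v π)
        _ < v π * 1 := mul_lt_mul_of_pos_left hπ1 hπ0
        _ = v π := mul_one _
    exact lt_irrefl _ this

end Paper
end

section
/- Let E/F be a finitely generated separable field extension. Then E is generated over F as a field by at most trdeg(E/F) + 1 elements. -/
set_option synthInstance.maxHeartbeats 1000000
set_option maxHeartbeats 2000000


open FirstOrder FirstOrder.Language

universe u v w x

namespace Paper

private theorem trans_diff {F E : Type*} [Field F] [Field E] [Algebra F E] {S : Set E}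
    (hS : AlgebraicIndependent F ((↑) : S → E)) {a : E} (ha : a ∈ S) :
    Transcendental (Algebra.adjoin F (S \ {a})) a := by
  have hx : AlgebraicIndependent F ((↑) : ↥(S \ {a}) → E) := hS.mono Set.diff_subset
  have key : AlgebraicIndependent F
      (fun o : Option ↥(S \ {a}) => o.elim a ((↑) : ↥(S \ {a}) → E)) := by
    have hinj : Function.Injective
        (fun o : Option ↥(S \ {a}) => o.elim (⟨a, ha⟩ : S) (fun x => ⟨x.1, x.2.1⟩)) := by
      rintro (_ | x) (_ | y) h
      · rfl
      · exact absurd (congrArg Subtype.val h).symm y.2.2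
      · exact absurd (congrArg Subtype.val h) x.2.2
      · simpa [Subtype.ext_iff] using congrArg Subtype.val h
    have := hS.comp _ hinj
    convert this using 1
    funext o; cases o <;> rfl
  have := (hx.option_iff_transcendental a).1 key
  rwa [Subtype.range_coe] at this

private theorem indep_insert {F E : Type*} [Field F] [Field E] [Algebra F E] {S : Set E}
    (hS : AlgebraicIndependent F ((↑) : S → E)) {a : E}
    (ht : Transcendental (Algebra.adjoin F S) a) :
    AlgebraicIndependent F ((↑) : ↥(insert a S) → E) := by
  have h1 : AlgebraicIndependent F (fun o : Option S => o.elim a ((↑) : S → E)) := by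
    apply (hS.option_iff_transcendental a).2
    rwa [Subtype.range_coe]
  have h2 := h1.coe_range
  have hr : Set.range (fun o : Option S => o.elim a ((↑) : S → E)) = insert a S := by
    ext x
    constructor
    · rintro ⟨(_ | y), rfl⟩
      · exact Set.mem_insert _ _
      · exact Set.mem_insert_of_mem _ y.2
    · rintro (rfl | hx)
      · exact ⟨none, rfl⟩
      · exact ⟨some ⟨x, hx⟩, rfl⟩
  rwa [hr] at h2

private theorem alg_of_field_adjoin {F E : Type*} [Field F] [Field E] [Algebra F E] {S : Set E}
    {a : E} (h : IsAlgebraic (IntermediateField.adjoin F S) a) :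
    IsAlgebraic (Algebra.adjoin F S) a := by
  letI : Algebra (Algebra.adjoin F S) (IntermediateField.adjoin F S) :=
    (Subalgebra.inclusion (IntermediateField.algebra_adjoin_le_adjoin F S)).toRingHom.toAlgebra
  haveI : IsScalarTower (Algebra.adjoin F S) (IntermediateField.adjoin F S) E :=
    IsScalarTower.of_algebraMap_eq (congrFun rfl)
  have hinj : Function.Injective
      (algebraMap (Algebra.adjoin F S) (IntermediateField.adjoin F S)) :=
    Subalgebra.inclusion_injective _
  haveI : IsFractionRing (Algebra.adjoin F S) (IntermediateField.adjoin F S) := by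
    refine (isLocalization_iff (nonZeroDivisors (Algebra.adjoin F S)) (IntermediateField.adjoin F S)).mpr ⟨?_, ?_, ?_⟩
    · rintro ⟨y, hy⟩
      refine isUnit_iff_ne_zero.2 fun h0 => ?_
      have : (y : Algebra.adjoin F S) = 0 := hinj (by simpa using h0)
      exact (nonZeroDivisors.ne_zero hy) this
    · intro z
      obtain ⟨r, s, hz⟩ := (IntermediateField.mem_adjoin_iff F (z : E)).1 z.2
      set p : E := MvPolynomial.aeval Subtype.val r with hp
      set q : E := MvPolynomial.aeval Subtype.val s with hq
      have hpmem : p ∈ Algebra.adjoin F S := by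
        rw [← Subtype.range_coe (s := S), Algebra.adjoin_range_eq_range_aeval]
        exact ⟨r, rfl⟩
      have hqmem : q ∈ Algebra.adjoin F S := by
        rw [← Subtype.range_coe (s := S), Algebra.adjoin_range_eq_range_aeval]
        exact ⟨s, rfl⟩
      by_cases hq0 : q = 0
      · refine ⟨⟨0, 1⟩, ?_⟩
        have : (z : E) = 0 := by rw [hz, hq0, div_zero]
        have hz0 : z = 0 := Subtype.ext this
        simp [hz0]
      · refine ⟨⟨⟨p, hpmem⟩, ⟨⟨q, hqmem⟩, mem_nonZeroDivisors_of_ne_zero (by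
          simpa [Subtype.ext_iff] using hq0)⟩⟩, ?_⟩
        apply Subtype.ext
        show (z : E) * q = p
        rw [hz, div_mul_cancel₀ _ hq0]
    · intro x y hxy
      exact ⟨1, by simpa using hinj hxy⟩
  exact (IsFractionRing.isAlgebraic_iff (Algebra.adjoin F S) (IntermediateField.adjoin F S) E).mpr h

private theorem maximal_alg {F E : Type*} [Field F] [Field E] [Algebra F E] {T S : Set E}
    (hmax : Maximal (fun x : Set E =>
      AlgebraicIndependent F ((↑) : x → E) ∧ x ⊆ T) S)
    {a : E} (ha : a ∈ T) : IsAlgebraic (IntermediateField.adjoin F S) a := by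
  by_cases haS : a ∈ S
  · have := isAlgebraic_algebraMap (R := IntermediateField.adjoin F S) (A := E)
      (⟨a, IntermediateField.subset_adjoin F S haS⟩ : IntermediateField.adjoin F S)
    simpa using this
  · by_contra h
    have htr : Transcendental (Algebra.adjoin F S) a := by
      have h' : Transcendental (IntermediateField.adjoin F S) a := h
      letI : Algebra (Algebra.adjoin F S) (IntermediateField.adjoin F S) :=
        (Subalgebra.inclusion (IntermediateField.algebra_adjoin_le_adjoin F S)).toRingHom.toAlgebra
      haveI : IsScalarTower (Algebra.adjoin F S) (IntermediateField.adjoin F S) E :=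
        IsScalarTower.of_algebraMap_eq (congrFun rfl)
      refine h'.restrictScalars fun x y hxy => Subtype.ext ?_
      have h2 := congrArg (Subtype.val : (IntermediateField.adjoin F S) → E) hxy
      exact h2
    have hins : AlgebraicIndependent F ((↑) : ↥(insert a S) → E) :=
      indep_insert hmax.1.1 htr
    have hsub : insert a S ⊆ T := Set.insert_subset ha hmax.1.2
    have hle : insert a S ⊆ S := hmax.2 ⟨hins, hsub⟩ (Set.subset_insert a S)
    exact haS (hle (Set.mem_insert a S))

private theorem key_aux (F : Type u) (E : Type v) [Field F] [Field E] [Algebra F E]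
    [DecidableEq E] :
    ∀ (n : ℕ) (u t : Finset E), (u \ t).card ≤ n →
    AlgebraicIndependent F ((↑) : (↑u : Set E) → E) →
    (∀ a ∈ u, IsAlgebraic (IntermediateField.adjoin F (↑t : Set E)) a) →
    u.card ≤ t.card := by
  intro n
  induction n with
  | zero =>
    intro u t hc _ _
    exact Finset.card_le_card (Finset.sdiff_eq_empty_iff_subset.1 (Finset.card_eq_zero.1
      (Nat.le_zero.1 hc)))
  | succ n ih =>
    intro u t hcard hindep halg
    by_cases hsub : u ⊆ t
    · exact Finset.card_le_card hsub
    obtain ⟨x₀, hx₀u, hx₀t⟩ := Finset.not_subset.1 hsub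
    -- the starting independent set
    have hs0sub : (insert x₀ (↑(u ∩ t) : Set E)) ⊆ (↑u : Set E) := by
      intro x hx
      rcases hx with rfl | hx
      · exact hx₀u
      · exact Finset.mem_of_mem_inter_left (by exact_mod_cast hx)
    have hs0indep : AlgebraicIndependent F ((↑) : ↥(insert x₀ (↑(u ∩ t) : Set E)) → E) :=
      hindep.mono hs0sub
    have hs0T : (insert x₀ (↑(u ∩ t) : Set E)) ⊆ insert x₀ (↑t : Set E) := by
      intro x hx
      rcases hx with rfl | hx
      · exact Set.mem_insert _ _
      · exact Set.mem_insert_of_mem _ (Finset.mem_of_mem_inter_right (by exact_mod_cast hx))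
    obtain ⟨S, hs0S, hSmax⟩ := exists_maximal_algebraicIndependent
      (insert x₀ (↑(u ∩ t) : Set E)) (insert x₀ (↑t : Set E)) hs0T hs0indep
    have hSind : AlgebraicIndependent F ((↑) : S → E) := hSmax.1.1
    have hST : S ⊆ insert x₀ (↑t : Set E) := hSmax.1.2
    have hx₀S : x₀ ∈ S := hs0S (Set.mem_insert _ _)
    have hSfin : S.Finite := (Set.Finite.insert x₀ t.finite_toSet).subset hST
    have halgS : ∀ a ∈ insert x₀ (↑t : Set E),
        IsAlgebraic (IntermediateField.adjoin F S) a := fun a ha => maximal_alg hSmax ha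
    -- S is a proper subset of insert x₀ t
    have hne : S ≠ insert x₀ (↑t : Set E) := by
      intro hEq
      have htr := trans_diff hSind hx₀S
      rw [hEq, Set.insert_diff_self_of_notMem (by exact_mod_cast hx₀t)] at htr
      exact htr (alg_of_field_adjoin (halg x₀ hx₀u))
    -- the new finset t'
    set t' : Finset E := hSfin.toFinset with ht'
    have hcoe : (↑t' : Set E) = S := hSfin.coe_toFinset
    have ht'sub : t' ⊆ insert x₀ t := by
      intro x hx
      have : x ∈ S := by rwa [← hcoe]
      have := hST this
      rcases this with rfl | hx'
      · exact Finset.mem_insert_self _ _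
      · exact Finset.mem_insert_of_mem (by exact_mod_cast hx')
    have ht'ne : t' ≠ insert x₀ t := by
      intro hEq
      apply hne
      rw [← hcoe, hEq]
      push_cast
      rfl
    have ht'card : t'.card ≤ t.card := by
      have h1 : t'.card < (insert x₀ t).card := Finset.card_lt_card ⟨ht'sub, fun h =>
        ht'ne (Finset.Subset.antisymm ht'sub h)⟩
      rw [Finset.card_insert_of_notMem hx₀t] at h1
      omega
    -- every element of u is algebraic over F(t')
    have halg' : ∀ a ∈ u, IsAlgebraic (IntermediateField.adjoin F (↑t' : Set E)) a := by
      rw [hcoe]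
      intro a hau
      set K := IntermediateField.adjoin F S with hK
      set M : IntermediateField K E := IntermediateField.adjoin K (↑t : Set E) with hM
      haveI hMalg : Algebra.IsAlgebraic K M := IntermediateField.isAlgebraic_adjoin
        (fun x hx => (halgS x (Set.mem_insert_of_mem _ hx)).isIntegral)
      have hle : IntermediateField.adjoin F (↑t : Set E) ≤ M.restrictScalars F := by
        apply IntermediateField.adjoin_le_iff.2
        intro x hx
        exact IntermediateField.subset_adjoin K _ hx
      letI : Algebra (IntermediateField.adjoin F (↑t : Set E)) M :=
        ((IntermediateField.inclusion hle).toRingHom :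
          (IntermediateField.adjoin F (↑t : Set E)) →+* (M.restrictScalars F)).toAlgebra
      haveI : IsScalarTower (IntermediateField.adjoin F (↑t : Set E)) M E :=
        IsScalarTower.of_algebraMap_eq (congrFun rfl)
      have hMa : IsAlgebraic M a := by
        refine (halg a hau).extendScalars (R := IntermediateField.adjoin F (↑t : Set E))
          (fun x y hxy => Subtype.ext ?_)
        have h2 := congrArg (Subtype.val : M → E) hxy
        exact h2
      haveI : Algebra.IsIntegral K M := Algebra.isAlgebraic_iff_isIntegral.mp hMalg
      exact (isIntegral_trans a hMa.isIntegral).isAlgebraic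
    -- the measure decreases
    have hmeas : (u \ t').card ≤ n := by
      have hsub2 : u \ t' ⊆ (u \ t).erase x₀ := by
        intro a ha
        obtain ⟨hau, hat'⟩ := Finset.mem_sdiff.1 ha
        have haS : a ∉ S := fun h => hat' (by rwa [← hcoe] at h)
        refine Finset.mem_erase.2 ⟨fun h => haS (h ▸ hx₀S), Finset.mem_sdiff.2 ⟨hau, fun hat => ?_⟩⟩
        exact haS (hs0S (Set.mem_insert_of_mem _ (by exact_mod_cast Finset.mem_inter.2 ⟨hau, hat⟩)))
      have := Finset.card_le_card hsub2
      have h3 : x₀ ∈ u \ t := Finset.mem_sdiff.2 ⟨hx₀u, hx₀t⟩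
      have h4 := Finset.card_erase_of_mem h3
      omega
    exact (ih u t' hmeas hindep halg').trans ht'card

/-- Lemma `lem:prim_elem` of the paper.
Let `E/F` be a finitely generated separable field extension.  Then `E` is generated over `F`
(as a field) by at most `trdeg(E/F) + 1` elements: for every `d` with `trdeg(E/F) ≤ d`,
there is a generating set with at most `d + 1` elements. -/
theorem statement9 (F : Type u) [Field F] (E : Type v) [Field E] [Algebra F E]
    -- `E/F` is finitely generated
    (hfg : ∃ s : Finset E, IntermediateField.adjoin F (s : Set E) = ⊤)
    -- `E/F` is separable, i.e. admits a separating transcendence basis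
    (hsep : HasSepTransBasis F E)
    (d : ℕ) (hd : TrdegLE F E d) :
    ∃ t : Finset E, t.card ≤ d + 1 ∧ IntermediateField.adjoin F (t : Set E) = ⊤ := by
  classical
  obtain ⟨s, hsind, hsSep⟩ := hsep
  obtain ⟨s', hs'card, hs'basis⟩ := hd
  haveI halgE : Algebra.IsAlgebraic (IntermediateField.adjoin F (↑s' : Set E)) E := by
    have := hs'basis.isAlgebraic_field
    rwa [Subtype.range_coe] at this
  -- every finite subset of s has at most d elements
  have hbound : ∀ v : Finset E, (↑v : Set E) ⊆ s → v.card ≤ d := by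
    intro v hv
    refine le_trans (key_aux F E (v \ s').card v s' le_rfl (hsind.mono hv)
      (fun a _ => halgE.isAlgebraic a)) hs'card
  -- s is finite with at most d elements
  have hsfin : s.Finite := by
    by_contra hinf
    obtain ⟨v, hvsub, hvcard⟩ := (Set.Infinite.exists_subset_card_eq hinf (d + 1))
    have := hbound v hvsub
    omega
  set s₀ : Finset E := hsfin.toFinset with hs₀
  have hs₀coe : (↑s₀ : Set E) = s := hsfin.coe_toFinset
  have hs₀card : s₀.card ≤ d := hbound s₀ (by rw [hs₀coe])
  -- the base field L = F(s)
  set L := IntermediateField.adjoin F s with hL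
  haveI : Algebra.IsSeparable L E := hsSep
  haveI : Algebra.IsAlgebraic L E := Algebra.IsSeparable.isAlgebraic L E
  -- finite dimensionality of E over L
  obtain ⟨g, hg⟩ := hfg
  have htop : IntermediateField.adjoin L (↑g : Set E) = ⊤ := by
    have h1 : (IntermediateField.adjoin L (↑g : Set E)).restrictScalars F = ⊤ := by
      rw [IntermediateField.restrictScalars_adjoin]
      rw [eq_top_iff, ← hg]
      exact IntermediateField.adjoin.mono _ _ _ Set.subset_union_right
    apply IntermediateField.restrictScalars_injective F
    rw [h1, IntermediateField.restrictScalars_top]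
  haveI : FiniteDimensional L (IntermediateField.adjoin L (↑g : Set E)) :=
    IntermediateField.finiteDimensional_adjoin
      (fun x _ => (Algebra.IsAlgebraic.isAlgebraic (R := L) x).isIntegral)
  haveI : FiniteDimensional L E := by
    rw [htop] at this
    exact (IntermediateField.topEquiv (F := L) (E := E)).toLinearEquiv.finiteDimensional
  -- primitive element
  obtain ⟨α, hα⟩ := Field.exists_primitive_element L E
  refine ⟨insert α s₀, ?_, ?_⟩
  · exact le_trans (Finset.card_insert_le _ _) (by omega)
  · have h2 : (IntermediateField.adjoin L ({α} : Set E)).restrictScalars F = ⊤ := by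
      rw [hα, IntermediateField.restrictScalars_top]
    rw [hL, IntermediateField.adjoin_adjoin_left] at h2
    rw [Finset.coe_insert, hs₀coe, ← Set.union_singleton]
    exact h2

end Paper
end
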